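/- Let T be an (r × c, v)-near triple array with 2 ≤ r, 2 ≤ c and max(r,c) ≤ v ≤ rc, with parameters e = rc/v, λ_rc, λ_cc. Then the following are equivalent: (a) e ≤ 2, λ_rc ≤ 2 and λ_cc ≤ 1; (b) 2v ≥ 2rc − c·min(r, c − 1). -/
import Mathlib


open Finset

/-- An `r × c` row-column design on `v` symbols is binary if no symbol occurs
twice in any row or in any column. -/
def IsBinaryDesign {r c v : ℕ} (T : Fin r × Fin c → Fin v) : Prop :=
  (∀ (i : Fin r) (j j' : Fin c), j ≠ j' → T (i, j) ≠ T (i, j')) ∧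
  (∀ (j : Fin c) (i i' : Fin r), i ≠ i' → T (i, j) ≠ T (i', j))

/-- The replication number of a symbol `s`: the number of cells containing `s`. -/
def replNum {r c v : ℕ} (T : Fin r × Fin c → Fin v) (s : Fin v) : ℕ :=
  (Finset.univ.filter (fun p : Fin r × Fin c => T p = s)).card

/-- The average replication number `e = rc/v` as a rational number. -/
def avgRepl (r c v : ℕ) : ℚ := ((r : ℚ) * (c : ℚ)) / (v : ℚ)

/-- A design is equireplicate if `e = rc/v` is an integer and every symbol has
replication number `e`. -/
def IsEquireplicate {r c v : ℕ} (T : Fin r × Fin c → Fin v) : Prop :=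
  (avgRepl r c v).den = 1 ∧ ∀ s : Fin v, (replNum T s : ℚ) = avgRepl r c v

/-- A design is near equireplicate if `e = rc/v` is not an integer and every symbol
has replication number `⌊e⌋` or `⌈e⌉`. -/
def IsNearEquireplicate {r c v : ℕ} (T : Fin r × Fin c → Fin v) : Prop :=
  (avgRepl r c v).den ≠ 1 ∧
  ∀ s : Fin v, (replNum T s : ℤ) = ⌊avgRepl r c v⌋ ∨ (replNum T s : ℤ) = ⌈avgRepl r c v⌉

/-- The set of symbols occurring in row `i`. -/
def rowSet {r c v : ℕ} (T : Fin r × Fin c → Fin v) (i : Fin r) : Finset (Fin v) :=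
  Finset.univ.image (fun j : Fin c => T (i, j))

/-- The set of symbols occurring in column `j`. -/
def colSet {r c v : ℕ} (T : Fin r × Fin c → Fin v) (j : Fin c) : Finset (Fin v) :=
  Finset.univ.image (fun i : Fin r => T (i, j))

/-- Average row-column intersection size `λ_rc`. -/
def lamRC {r c v : ℕ} (T : Fin r × Fin c → Fin v) : ℚ :=
  (∑ i : Fin r, ∑ j : Fin c, ((rowSet T i ∩ colSet T j).card : ℚ)) / ((r : ℚ) * (c : ℚ))

/-- Average row-row intersection size `λ_rr`. -/
def lamRR {r c v : ℕ} (T : Fin r × Fin c → Fin v) : ℚ :=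
  (∑ p ∈ Finset.univ.filter (fun p : Fin r × Fin r => p.1 < p.2),
      ((rowSet T p.1 ∩ rowSet T p.2).card : ℚ)) / ((r : ℚ) * ((r : ℚ) - 1) / 2)

/-- Average column-column intersection size `λ_cc`. -/
def lamCC {r c v : ℕ} (T : Fin r × Fin c → Fin v) : ℚ :=
  (∑ p ∈ Finset.univ.filter (fun p : Fin c × Fin c => p.1 < p.2),
      ((colSet T p.1 ∩ colSet T p.2).card : ℚ)) / ((c : ℚ) * ((c : ℚ) - 1) / 2)

/-- An `(r × c, v)`-near triple array. -/
def IsNearTripleArray {r c v : ℕ} (T : Fin r × Fin c → Fin v) : Prop :=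
  IsBinaryDesign T ∧ (IsEquireplicate T ∨ IsNearEquireplicate T) ∧
  (∀ (i : Fin r) (j : Fin c),
    ((rowSet T i ∩ colSet T j).card : ℤ) = ⌊lamRC T⌋ ∨
    ((rowSet T i ∩ colSet T j).card : ℤ) = ⌈lamRC T⌉) ∧
  (∀ i j : Fin r, i ≠ j →
    ((rowSet T i ∩ rowSet T j).card : ℤ) = ⌊lamRR T⌋ ∨
    ((rowSet T i ∩ rowSet T j).card : ℤ) = ⌈lamRR T⌉) ∧
  (∀ i j : Fin c, i ≠ j →
    ((colSet T i ∩ colSet T j).card : ℤ) = ⌊lamCC T⌋ ∨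
    ((colSet T i ∩ colSet T j).card : ℤ) = ⌈lamCC T⌉)

section Aux

variable {r c v : ℕ} (T : Fin r × Fin c → Fin v)

theorem sum_replNum : ∑ s : Fin v, replNum T s = r * c := by
  unfold replNum
  simp only [Finset.card_filter]
  rw [Finset.sum_comm]
  simp [Finset.sum_ite_eq, Finset.card_univ]

theorem card_rowFins (hb : IsBinaryDesign T) (s : Fin v) :
    (Finset.univ.filter (fun i : Fin r => s ∈ rowSet T i)).card = replNum T s := by
  symm
  apply Finset.card_bij (fun p _ => p.1)
  · rintro ⟨i, j⟩ hp
    simp only [Finset.mem_filter, Finset.mem_univ, true_and] at hp ⊢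
    simp only [rowSet, Finset.mem_image]
    exact ⟨j, Finset.mem_univ _, hp⟩
  · rintro ⟨i, j⟩ hp ⟨i', j'⟩ hq h
    simp only [Finset.mem_filter, Finset.mem_univ, true_and] at hp hq
    simp only at h
    subst h
    by_contra hne
    have h2 : j ≠ j' := by intro h2; exact hne (by rw [h2])
    exact hb.1 i j j' h2 (hp.trans hq.symm)
  · intro i hi
    simp only [Finset.mem_filter, Finset.mem_univ, true_and, rowSet, Finset.mem_image] at hi
    obtain ⟨j, hj⟩ := hi
    exact ⟨(i, j), by simp [hj], rfl⟩

theorem card_colFins (hb : IsBinaryDesign T) (s : Fin v) :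
    (Finset.univ.filter (fun j : Fin c => s ∈ colSet T j)).card = replNum T s := by
  symm
  apply Finset.card_bij (fun p _ => p.2)
  · rintro ⟨i, j⟩ hp
    simp only [Finset.mem_filter, Finset.mem_univ, true_and] at hp ⊢
    simp only [colSet, Finset.mem_image]
    exact ⟨i, Finset.mem_univ _, hp⟩
  · rintro ⟨i, j⟩ hp ⟨i', j'⟩ hq h
    simp only [Finset.mem_filter, Finset.mem_univ, true_and] at hp hq
    simp only at h
    subst h
    by_contra hne
    have h1 : i ≠ i' := by intro h1; exact hne (by rw [h1])
    exact hb.2 j i i' h1 (hp.trans hq.symm)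
  · intro j hj
    simp only [Finset.mem_filter, Finset.mem_univ, true_and, colSet, Finset.mem_image] at hj
    obtain ⟨i, hi⟩ := hj
    exact ⟨(i, j), by simp [hi], rfl⟩

theorem inter_card_expand {v : ℕ} (A B : Finset (Fin v)) :
    (A ∩ B).card = ∑ s : Fin v, (if s ∈ A then 1 else 0) * (if s ∈ B then 1 else 0) := by
  have h : A ∩ B = Finset.univ.filter (fun s => s ∈ A ∧ s ∈ B) := by ext s; simp
  rw [h, Finset.card_filter]
  refine Finset.sum_congr rfl fun s _ => ?_
  by_cases h1 : s ∈ A <;> by_cases h2 : s ∈ B <;> simp [h1, h2]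

theorem sumRC (hb : IsBinaryDesign T) :
    ∑ i : Fin r, ∑ j : Fin c, (rowSet T i ∩ colSet T j).card
      = ∑ s : Fin v, replNum T s * replNum T s := by
  symm
  calc ∑ s : Fin v, replNum T s * replNum T s
      = ∑ s : Fin v, (∑ i : Fin r, if s ∈ rowSet T i then 1 else 0)
          * (∑ j : Fin c, if s ∈ colSet T j then 1 else 0) := by
        refine Finset.sum_congr rfl fun s _ => ?_
        rw [← Finset.card_filter, ← Finset.card_filter, card_rowFins T hb, card_colFins T hb]
    _ = ∑ s : Fin v, ∑ i : Fin r, ∑ j : Fin c,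
          (if s ∈ rowSet T i then 1 else 0) * (if s ∈ colSet T j then 1 else 0) := by
        refine Finset.sum_congr rfl fun s _ => ?_
        rw [Finset.sum_mul_sum]
    _ = ∑ i : Fin r, ∑ s : Fin v, ∑ j : Fin c,
          (if s ∈ rowSet T i then 1 else 0) * (if s ∈ colSet T j then 1 else 0) :=
        Finset.sum_comm
    _ = ∑ i : Fin r, ∑ j : Fin c, ∑ s : Fin v,
          (if s ∈ rowSet T i then 1 else 0) * (if s ∈ colSet T j then 1 else 0) :=
        Finset.sum_congr rfl fun i _ => Finset.sum_comm
    _ = ∑ i : Fin r, ∑ j : Fin c, (rowSet T i ∩ colSet T j).card := by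
        simp only [inter_card_expand]

theorem two_mul_card_lt_pairs {α : Type*} [Fintype α] [LinearOrder α] [DecidableEq α]
    (S : Finset α) :
    2 * (S.offDiag.filter (fun p => p.1 < p.2)).card + S.card = S.card * S.card := by
  have h1 : (S.offDiag.filter (fun p => p.1 < p.2)).card
      = (S.offDiag.filter (fun p => ¬ p.1 < p.2)).card := by
    apply Finset.card_bij (fun p _ => Prod.swap p)
    · rintro ⟨a, b⟩ hp
      simp only [Finset.mem_filter, Finset.mem_offDiag] at hp ⊢
      exact ⟨⟨hp.1.2.1, hp.1.1, hp.1.2.2.symm⟩, not_lt.mpr (le_of_lt hp.2)⟩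
    · rintro ⟨a, b⟩ _ ⟨a', b'⟩ _ h
      simpa [Prod.ext_iff, and_comm] using h
    · rintro ⟨a, b⟩ hq
      simp only [Finset.mem_filter, Finset.mem_offDiag, not_lt] at hq
      refine ⟨(b, a), ?_, rfl⟩
      simp only [Finset.mem_filter, Finset.mem_offDiag]
      exact ⟨⟨hq.1.2.1, hq.1.1, hq.1.2.2.symm⟩, lt_of_le_of_ne hq.2 hq.1.2.2.symm⟩
  have h2 := Finset.card_filter_add_card_filter_not
    (s := S.offDiag) (p := fun p => p.1 < p.2)
  have h3 : S.offDiag.card = S.card * S.card - S.card := Finset.offDiag_card S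
  have h4 : S.card ≤ S.card * S.card := by
    rcases Nat.eq_zero_or_pos S.card with h | h
    · simp [h]
    · exact Nat.le_mul_of_pos_left _ h
  set a := (S.offDiag.filter (fun p => p.1 < p.2)).card
  set m := S.card * S.card
  omega

theorem sumCC (hb : IsBinaryDesign T) :
    2 * (∑ p ∈ Finset.univ.filter (fun p : Fin c × Fin c => p.1 < p.2),
          (colSet T p.1 ∩ colSet T p.2).card) + r * c
      = ∑ s : Fin v, replNum T s * replNum T s := by
  have key : ∑ p ∈ Finset.univ.filter (fun p : Fin c × Fin c => p.1 < p.2),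
      (colSet T p.1 ∩ colSet T p.2).card
      = ∑ s : Fin v,
          (((Finset.univ.filter (fun j : Fin c => s ∈ colSet T j)).offDiag.filter
            (fun p => p.1 < p.2)).card) := by
    simp only [inter_card_expand]
    rw [Finset.sum_comm]
    refine Finset.sum_congr rfl fun s _ => ?_
    have h : ∀ p : Fin c × Fin c,
        (if s ∈ colSet T p.1 then 1 else 0) * (if s ∈ colSet T p.2 then 1 else 0)
        = if s ∈ colSet T p.1 ∧ s ∈ colSet T p.2 then 1 else 0 := by
      intro p; by_cases h1 : s ∈ colSet T p.1 <;> by_cases h2 : s ∈ colSet T p.2 <;>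
        simp [h1, h2]
    simp only [h]
    rw [← Finset.card_filter]
    congr 1
    ext p
    simp only [Finset.mem_filter, Finset.mem_offDiag, Finset.mem_univ, true_and]
    constructor
    · rintro ⟨hlt, h1, h2⟩
      exact ⟨⟨h1, h2, ne_of_lt hlt⟩, hlt⟩
    · rintro ⟨⟨h1, h2, _⟩, hlt⟩
      exact ⟨hlt, h1, h2⟩
  rw [key, Finset.mul_sum, ← sum_replNum T, ← Finset.sum_add_distrib]
  refine Finset.sum_congr rfl fun s _ => ?_
  rw [← card_colFins T hb s]
  exact two_mul_card_lt_pairs _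

theorem repl_one_or_two (hrep : IsEquireplicate T ∨ IsNearEquireplicate T)
    (h1 : 1 ≤ avgRepl r c v) (h2 : avgRepl r c v ≤ 2) (s : Fin v) :
    replNum T s = 1 ∨ replNum T s = 2 := by
  rcases hrep with ⟨_, h⟩ | ⟨_, h⟩
  · have hs := h s
    have l1 : (1 : ℚ) ≤ (replNum T s : ℚ) := hs ▸ h1
    have l2 : ((replNum T s : ℚ)) ≤ 2 := hs ▸ h2
    have n1 : 1 ≤ replNum T s := by exact_mod_cast l1
    have n2 : replNum T s ≤ 2 := by exact_mod_cast l2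
    omega
  · have hf : (1 : ℤ) ≤ ⌊avgRepl r c v⌋ := Int.le_floor.mpr (by exact_mod_cast h1)
    have hcl : ⌈avgRepl r c v⌉ ≤ 2 := Int.ceil_le.mpr (by exact_mod_cast h2)
    have hfc := Int.floor_le_ceil (avgRepl r c v)
    have hcf := Int.ceil_le_floor_add_one (avgRepl r c v)
    rcases h s with h' | h' <;> omega

theorem keyArith (A B M S W v : ℕ)
    (hm1 : M ≤ A) (hm2 : M ≤ B) (hM : M = A ∨ M = B)
    (hsumCC : 2 * S + A = W) (hterm : W + v * 2 = 3 * A) :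
    (A ≤ 2 * v ∧ 2 * S ≤ B) ↔ 2 * A - M ≤ 2 * v := by omega

theorem keyArith2 (A M v : ℕ) (hm1 : M ≤ A) (h : 2 * A - M ≤ 2 * v) : A ≤ 2 * v := by omega

theorem keyArith3 (A W v : ℕ) (hterm : W + v * 2 = 3 * A) (h : A ≤ 2 * v) : W ≤ 2 * A := by
  omega

end Aux

/-- For a near triple array, `e ≤ 2 ∧ λ_rc ≤ 2 ∧ λ_cc ≤ 1` is
equivalent to `2v ≥ 2rc − c·min(r, c − 1)`. -/
theorem smallLambda_iff {r c v : ℕ} (hr : 2 ≤ r) (hc : 2 ≤ c)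
    (hv1 : max r c ≤ v) (hv2 : v ≤ r * c)
    (T : Fin r × Fin c → Fin v) (hT : IsNearTripleArray T) :
    (avgRepl r c v ≤ 2 ∧ lamRC T ≤ 2 ∧ lamCC T ≤ 1) ↔
      2 * r * c - c * min r (c - 1) ≤ 2 * v := by
  obtain ⟨hb, hrep, -, -, -⟩ := hT
  have hv0 : 0 < v := lt_of_lt_of_le (by omega) (le_trans (Nat.le_max_left r c) hv1)
  have hvQ : (0 : ℚ) < v := by exact_mod_cast hv0
  have hrcQ : (0 : ℚ) < (r : ℚ) * c := by
    have : 0 < r * c := Nat.mul_pos (by omega) (by omega)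
    exact_mod_cast this
  have he1 : 1 ≤ avgRepl r c v := by
    rw [avgRepl, le_div_iff₀ hvQ, one_mul]
    exact_mod_cast hv2
  have heiff : avgRepl r c v ≤ 2 ↔ r * c ≤ 2 * v := by
    rw [avgRepl, div_le_iff₀ hvQ]
    constructor <;> intro h <;> exact_mod_cast h
  -- lamRC characterization
  have hsumRC := sumRC T hb
  have hRCiff : lamRC T ≤ 2 ↔
      (∑ s : Fin v, replNum T s * replNum T s) ≤ 2 * (r * c) := by
    have hlam : lamRC T
        = ((∑ s : Fin v, replNum T s * replNum T s : ℕ) : ℚ) / ((r : ℚ) * c) := by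
      rw [lamRC]
      congr 1
      rw [← hsumRC]
      push_cast
      rfl
    rw [hlam, div_le_iff₀ hrcQ]
    constructor <;> intro h <;> exact_mod_cast h
  -- lamCC characterization
  set Scc : ℕ := ∑ p ∈ Finset.univ.filter (fun p : Fin c × Fin c => p.1 < p.2),
      (colSet T p.1 ∩ colSet T p.2).card with hSccdef
  have hsumCC := sumCC T hb
  have hc1 : ((c - 1 : ℕ) : ℚ) = (c : ℚ) - 1 := by
    have h1c : 1 ≤ c := by omega
    push_cast [h1c]
    ring
  have hdenQ : (0 : ℚ) < (c : ℚ) * ((c : ℚ) - 1) / 2 := by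
    have h2c : (2 : ℚ) ≤ (c : ℚ) := by exact_mod_cast hc
    nlinarith
  have hCCiff : lamCC T ≤ 1 ↔ 2 * Scc ≤ c * (c - 1) := by
    have hlam : lamCC T = ((Scc : ℕ) : ℚ) / ((c : ℚ) * ((c : ℚ) - 1) / 2) := by
      rw [lamCC, hSccdef]
      congr 1
      push_cast
      rfl
    rw [hlam, div_le_one hdenQ]
    constructor
    · intro h
      have h2 : 2 * (Scc : ℚ) ≤ (c : ℚ) * ((c : ℚ) - 1) := by linarith
      rw [← hc1] at h2
      exact_mod_cast h2
    · intro h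
      have h2 : 2 * (Scc : ℚ) ≤ (c : ℚ) * (((c : ℕ) - 1 : ℕ) : ℚ) := by exact_mod_cast h
      rw [hc1] at h2
      linarith
  -- goal massage
  rw [mul_assoc 2 r c]
  have hm1 : c * min r (c - 1) ≤ r * c :=
    le_trans (Nat.mul_le_mul_left c (min_le_left _ _)) (le_of_eq (mul_comm c r))
  have hm2 : c * min r (c - 1) ≤ c * (c - 1) := Nat.mul_le_mul_left c (min_le_right _ _)
  have hM : c * min r (c - 1) = r * c ∨ c * min r (c - 1) = c * (c - 1) := by
    rcases le_total r (c - 1) with hm | hm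
    · left; rw [min_eq_left hm, mul_comm]
    · right; rw [min_eq_right hm]
  constructor
  · rintro ⟨he, -, hcc1⟩
    have hP : r * c ≤ 2 * v := heiff.mp he
    have hN : ∀ s : Fin v, replNum T s = 1 ∨ replNum T s = 2 :=
      repl_one_or_two T hrep he1 he
    have hterm : ∑ s : Fin v, (replNum T s * replNum T s + 2)
        = ∑ s : Fin v, 3 * replNum T s :=
      Finset.sum_congr rfl fun s _ => by rcases hN s with h | h <;> rw [h]
    rw [Finset.sum_add_distrib, Finset.sum_const, ← Finset.mul_sum, sum_replNum] at hterm
    simp only [Finset.card_univ, Fintype.card_fin, smul_eq_mul] at hterm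
    have h2S : 2 * Scc ≤ c * (c - 1) := hCCiff.mp hcc1
    exact (keyArith (r * c) (c * (c - 1)) (c * min r (c - 1)) Scc _ v hm1 hm2 hM hsumCC
      hterm).mp ⟨hP, h2S⟩
  · intro h
    have hP : r * c ≤ 2 * v := keyArith2 _ _ _ hm1 h
    have he : avgRepl r c v ≤ 2 := heiff.mpr hP
    have hN : ∀ s : Fin v, replNum T s = 1 ∨ replNum T s = 2 :=
      repl_one_or_two T hrep he1 he
    have hterm : ∑ s : Fin v, (replNum T s * replNum T s + 2)
        = ∑ s : Fin v, 3 * replNum T s :=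
      Finset.sum_congr rfl fun s _ => by rcases hN s with h | h <;> rw [h]
    rw [Finset.sum_add_distrib, Finset.sum_const, ← Finset.mul_sum, sum_replNum] at hterm
    simp only [Finset.card_univ, Fintype.card_fin, smul_eq_mul] at hterm
    exact ⟨he, hRCiff.mpr (keyArith3 _ _ _ hterm hP),
      hCCiff.mpr ((keyArith (r * c) (c * (c - 1)) (c * min r (c - 1)) Scc _ v hm1 hm2 hM
        hsumCC hterm).mpr h).2⟩
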